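/- The Gaussian kernel k_g(u,u') = exp(−‖u−u'‖²/σ²) on ℝ^d with σ ≠ 0 satisfies: (i) sup_u k_g(u,u) ≤ 1, and (ii) for all u₁, u₂ ∈ ℝ^d, the function v ↦ k_g(u₁,v) − k_g(u₂,v) is (2√2 e^{−1/2}/|σ|)-Lipschitz. -/
import Mathlib

private lemma gauss_deriv_bound (σ : ℝ) (hσ : σ ≠ 0) (t : ℝ) :
    2 * |t| / σ ^ 2 * Real.exp (-t ^ 2 / σ ^ 2)
      ≤ Real.sqrt 2 * Real.exp (-(1 / 2)) / |σ| := by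
  have hσ2 : (0:ℝ) < σ ^ 2 := by positivity
  have hσa : (0:ℝ) < |σ| := abs_pos.mpr hσ
  set a : ℝ := t ^ 2 / σ ^ 2 with ha
  have ha0 : 0 ≤ a := by positivity
  have hta : |t| / |σ| = Real.sqrt a := by
    rw [ha, Real.sqrt_div (by positivity), Real.sqrt_sq_eq_abs, Real.sqrt_sq_eq_abs]
  have hexp : Real.exp (-t ^ 2 / σ ^ 2) = Real.exp (-a) := by rw [ha, neg_div]
  have hLHS : 2 * |t| / σ ^ 2 * Real.exp (-t ^ 2 / σ ^ 2)
      = (2 / |σ|) * (Real.sqrt a * Real.exp (-a)) := by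
    rw [hexp, ← hta]
    have hss : σ ^ 2 = |σ| * |σ| := by rw [← sq_abs, sq]
    rw [hss]
    field_simp
  rw [hLHS]
  have key : 2 * (Real.sqrt a * Real.exp (-a)) ≤ Real.sqrt 2 * Real.exp (-(1/2)) := by
    have h1 : 2 * a ≤ Real.exp (2 * a - 1) := by
      have := Real.add_one_le_exp (2 * a - 1)
      linarith
    have hsq : (2 * (Real.sqrt a * Real.exp (-a))) ^ 2
        ≤ (Real.sqrt 2 * Real.exp (-(1/2))) ^ 2 := by
      have hsa : Real.sqrt a ^ 2 = a := Real.sq_sqrt ha0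
      have hs2 : Real.sqrt 2 ^ 2 = 2 := Real.sq_sqrt (by norm_num)
      have he : Real.exp (-a) ^ 2 = Real.exp (-(2*a)) := by
        rw [← Real.exp_nat_mul]; ring_nf
      have he2 : Real.exp (-(1/2)) ^ 2 = Real.exp (-1) := by
        rw [← Real.exp_nat_mul]; norm_num
      have hmul : 2 * a * Real.exp (-(2*a)) ≤ Real.exp (-1) := by
        have hpos : 0 < Real.exp (-(2*a)) := Real.exp_pos _
        calc 2 * a * Real.exp (-(2*a)) ≤ Real.exp (2*a - 1) * Real.exp (-(2*a)) := by
              exact mul_le_mul_of_nonneg_right h1 hpos.le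
          _ = Real.exp (-1) := by rw [← Real.exp_add]; ring_nf
      calc (2 * (Real.sqrt a * Real.exp (-a))) ^ 2
          = 2 * (2 * a * Real.exp (-(2*a))) := by
            rw [mul_pow, mul_pow, hsa, he]; ring
        _ ≤ 2 * Real.exp (-1) := by linarith
        _ = (Real.sqrt 2 * Real.exp (-(1/2))) ^ 2 := by rw [mul_pow, hs2, he2]
    have h0 : 0 ≤ 2 * (Real.sqrt a * Real.exp (-a)) := by positivity
    have h0' : 0 ≤ Real.sqrt 2 * Real.exp (-(1/2)) := by positivity
    nlinarith [hsq, h0, h0']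
  calc (2 / |σ|) * (Real.sqrt a * Real.exp (-a))
      = (2 * (Real.sqrt a * Real.exp (-a))) / |σ| := by ring
    _ ≤ (Real.sqrt 2 * Real.exp (-(1/2))) / |σ| := by
        gcongr

private lemma gauss_lip (σ : ℝ) (hσ : σ ≠ 0) (x y : ℝ) :
    |Real.exp (-x ^ 2 / σ ^ 2) - Real.exp (-y ^ 2 / σ ^ 2)|
      ≤ (Real.sqrt 2 * Real.exp (-(1 / 2)) / |σ|) * |x - y| := by
  have hσ2 : (0:ℝ) < σ ^ 2 := by positivity
  set f : ℝ → ℝ := fun t => Real.exp (-t ^ 2 / σ ^ 2) with hf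
  set f' : ℝ → ℝ := fun t => Real.exp (-t ^ 2 / σ ^ 2) * (-(2 * t) / σ ^ 2) with hf'
  have hderiv : ∀ t : ℝ, HasDerivAt f (f' t) t := by
    intro t
    have h1 : HasDerivAt (fun t : ℝ => -t ^ 2 / σ ^ 2) (-(2 * t) / σ ^ 2) t := by
      have := (hasDerivAt_pow 2 t).neg.div_const (σ ^ 2)
      simpa using this
    simpa [hf, hf'] using h1.exp
  have hbound : ∀ t : ℝ, ‖f' t‖ ≤ Real.sqrt 2 * Real.exp (-(1 / 2)) / |σ| := by
    intro t
    have heq : ‖f' t‖ = 2 * |t| / σ ^ 2 * Real.exp (-t ^ 2 / σ ^ 2) := by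
      rw [hf']
      rw [Real.norm_eq_abs, abs_mul, abs_of_pos (Real.exp_pos _), abs_div, abs_neg,
        abs_mul, abs_two, abs_of_pos hσ2]
      ring
    rw [heq]
    exact gauss_deriv_bound σ hσ t
  have := (convex_univ : Convex ℝ (Set.univ : Set ℝ)).norm_image_sub_le_of_norm_hasDerivWithin_le
    (fun t _ => (hderiv t).hasDerivWithinAt) (fun t _ => hbound t)
    (Set.mem_univ y) (Set.mem_univ x)
  simpa [Real.norm_eq_abs] using this

/-- The Gaussian kernel `k_g(u,u') = exp(-‖u-u'‖²/σ²)` satisfies `k_g(u,u) ≤ 1`, and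
for all `u₁, u₂` the difference `v ↦ k_g(u₁,v) - k_g(u₂,v)` is
`(2√2 e^{-1/2}/|σ|)`-Lipschitz. -/
theorem stmt_10 {d : ℕ} (σ : ℝ) (hσ : σ ≠ 0)
    (kg : EuclideanSpace ℝ (Fin d) → EuclideanSpace ℝ (Fin d) → ℝ)
    (hkg : ∀ u v, kg u v = Real.exp (-‖u - v‖ ^ 2 / σ ^ 2)) :
    (∀ u, kg u u ≤ 1) ∧
    (∀ u₁ u₂ v v' : EuclideanSpace ℝ (Fin d),
      |(kg u₁ v - kg u₂ v) - (kg u₁ v' - kg u₂ v')|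
        ≤ (2 * Real.sqrt 2 * Real.exp (-(1 / 2)) / |σ|) * ‖v - v'‖) := by
  constructor
  · intro u
    rw [hkg, sub_self, norm_zero]
    simp
  · intro u₁ u₂ v v'
    set L : ℝ := Real.sqrt 2 * Real.exp (-(1 / 2)) / |σ| with hL
    have hnorm : ∀ u : EuclideanSpace ℝ (Fin d), |‖u - v‖ - ‖u - v'‖| ≤ ‖v - v'‖ := by
      intro u
      have := abs_norm_sub_norm_le (u - v) (u - v')
      have heq : (u - v) - (u - v') = v' - v := by abel
      rw [heq] at this
      calc |‖u - v‖ - ‖u - v'‖| ≤ ‖v' - v‖ := this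
        _ = ‖v - v'‖ := norm_sub_rev _ _
    have h1 : |kg u₁ v - kg u₁ v'| ≤ L * ‖v - v'‖ := by
      rw [hkg, hkg]
      calc |Real.exp (-‖u₁ - v‖ ^ 2 / σ ^ 2) - Real.exp (-‖u₁ - v'‖ ^ 2 / σ ^ 2)|
          ≤ L * |‖u₁ - v‖ - ‖u₁ - v'‖| := gauss_lip σ hσ _ _
        _ ≤ L * ‖v - v'‖ := by
            have hL0 : 0 ≤ L := by positivity
            exact mul_le_mul_of_nonneg_left (hnorm u₁) hL0
    have h2 : |kg u₂ v - kg u₂ v'| ≤ L * ‖v - v'‖ := by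
      rw [hkg, hkg]
      calc |Real.exp (-‖u₂ - v‖ ^ 2 / σ ^ 2) - Real.exp (-‖u₂ - v'‖ ^ 2 / σ ^ 2)|
          ≤ L * |‖u₂ - v‖ - ‖u₂ - v'‖| := gauss_lip σ hσ _ _
        _ ≤ L * ‖v - v'‖ := by
            have hL0 : 0 ≤ L := by positivity
            exact mul_le_mul_of_nonneg_left (hnorm u₂) hL0
    have hsplit : (kg u₁ v - kg u₂ v) - (kg u₁ v' - kg u₂ v')
        = (kg u₁ v - kg u₁ v') - (kg u₂ v - kg u₂ v') := by ring
    calc |(kg u₁ v - kg u₂ v) - (kg u₁ v' - kg u₂ v')|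
        = |(kg u₁ v - kg u₁ v') - (kg u₂ v - kg u₂ v')| := by rw [hsplit]
      _ ≤ |kg u₁ v - kg u₁ v'| + |kg u₂ v - kg u₂ v'| := abs_sub _ _
      _ ≤ L * ‖v - v'‖ + L * ‖v - v'‖ := add_le_add h1 h2
      _ = (2 * Real.sqrt 2 * Real.exp (-(1 / 2)) / |σ|) * ‖v - v'‖ := by rw [hL]; ring
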